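/- arXiv:2101.02470 — 5 statements merged into one kernel-verified Lean document; each statement's English description precedes it below -/
import Mathlib

section
/- Let 1 < p < ∞ and let w be a strictly positive density on U satisfying (★). Then for every ψ ∈ L^∞, the function ψ̃(ξ) := ψ(ξ) − ∑_{i=1}^n (w_i^c(ξ_i^c)/w(ξ)) ∫ ψ(ξ)w(ξ)dξ_i^c + (n−1)∫_U ψ(η)w(η)dη belongs to N, i.e. ψ̃ ∈ L^p(w) and ∫ ψ̃(ξ)w(ξ)dξ_i^c = 0 for a.e. ξ_i, for every 1 ≤ i ≤ n. -/
open MeasureTheory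

noncomputable section

/-- `I` is a closed interval of the form `(-∞,b]`, `[a,∞)`, or `[a,b]` with `a < b`. -/
def IsClosedIntervalType (I : Set ℝ) : Prop :=
  (∃ b : ℝ, I = Set.Iic b) ∨ (∃ a : ℝ, I = Set.Ici a) ∨ (∃ a b : ℝ, a < b ∧ I = Set.Icc a b)

/-- Integrate out all coordinates except the `i`-th one, at value `t` of the `i`-th
coordinate: `margC i F t = ∫ F dξᵢᶜ` evaluated at `ξᵢ = t`. -/
def margC {n : ℕ} (i : Fin n) (F : (Fin n → ℝ) → ℝ) (t : ℝ) : ℝ :=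
  ∫ y : {j : Fin n // j ≠ i} → ℝ, F (fun j => if h : j = i then t else y ⟨j, h⟩)

/-- Integrate out the `i`-th coordinate: `margO i F ξ = ∫ F dξᵢ`, a function of `ξ`
depending only on `ξᵢᶜ`. -/
def margO {n : ℕ} (i : Fin n) (F : (Fin n → ℝ) → ℝ) (ξ : Fin n → ℝ) : ℝ :=
  ∫ t : ℝ, F (Function.update ξ i t)

/-- The weighted measure `w(ξ)dξ`; `L^p(w)` is `ℒ^p` of this measure. -/
def wMeasure {n : ℕ} (w : (Fin n → ℝ) → ℝ) : Measure (Fin n → ℝ) :=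
  volume.withDensity (fun ξ => ENNReal.ofReal (w ξ))

/-- `w` is a strictly positive density on `U` (extended by zero off `U`). -/
structure IsDensityOn {n : ℕ} (w : (Fin n → ℝ) → ℝ) (U : Set (Fin n → ℝ)) : Prop where
  measurable : Measurable w
  pos : ∀ ξ ∈ U, 0 < w ξ
  zero : ∀ ξ ∉ U, w ξ = 0
  integral_one : (∫ ξ, w ξ) = 1

/-- Condition (★): `wᵢ·wᵢᶜ/w ∈ L^p(w)` for all `1 ≤ i ≤ n`. -/
def StarCondition {n : ℕ} (w : (Fin n → ℝ) → ℝ) (p : ℝ) : Prop :=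
  ∀ i : Fin n,
    MemLp (fun ξ => margC i w (ξ i) * margO i w ξ / w ξ) (ENNReal.ofReal p) (wMeasure w)

/-- The Smirnov property for exponent `q`. -/
def SmirnovProperty {n : ℕ} (w : (Fin n → ℝ) → ℝ) (q : ℝ) : Prop :=
  ∀ Ψ : Fin n → ℝ → ℝ,
    (∀ i, MemLp (fun ξ => Ψ i (ξ i)) 1 (wMeasure w)) →
    MemLp (fun ξ => (1 / (n : ℝ)) * ∑ i, Ψ i (ξ i)) (ENNReal.ofReal q) (wMeasure w) →
    ∀ i, MemLp (fun ξ => Ψ i (ξ i)) (ENNReal.ofReal q) (wMeasure w)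

/-- Membership in `N = {φ ∈ L^p(w) : ∫ φ w dξᵢᶜ = 0 a.e., ∀ i}`. -/
def MemN {n : ℕ} (w : (Fin n → ℝ) → ℝ) (p : ℝ) (φ : (Fin n → ℝ) → ℝ) : Prop :=
  MemLp φ (ENNReal.ofReal p) (wMeasure w) ∧
  ∀ i : Fin n, ∀ᵐ t : ℝ, margC i (fun ξ => φ ξ * w ξ) t = 0

/-!
Write `F = ψ w`, `c = ∫ F` and `Kⱼ = ∫ F dξⱼᶜ`. Multiplied by `w`, the function becomes
`ψ̃ w = F - ∑ⱼ Kⱼ(ξⱼ) wⱼᶜ + (n - 1) c w` everywhere: off the box `U` every product `Kⱼ(ξⱼ) wⱼᶜ(ξ)`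
vanishes, since one of its two factors integrates `w` over a slice lying outside `U`.
Integrating over `ξᵢᶜ` by Fubini, the `i`-th product gives `Kᵢ(ξᵢ) ∫ w = Kᵢ(ξᵢ)`, while for
`j ≠ i` splitting off `ξⱼ` gives `(∫ Kⱼ) wᵢ(ξᵢ) = c wᵢ(ξᵢ)`, so everything cancels.
For the `L^p` bound, `|ψ| ≤ C` gives `|Kⱼ| ≤ C wⱼ`, so each correction term is dominated by
`C wⱼ wⱼᶜ / w`, which lies in `L^p(w)` by (★).
-/

namespace MeasurableEquiv

section

variable {ι : Type*} [DecidableEq ι] {α : Type*} [MeasurableSpace α]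

/-- Unlike `Equiv.funSplitAt`, the inverse is definitionally
`fun (t, y) j => if h : j = i then t else y ⟨j, h⟩`, the form used in `margC`. -/
def funSplitAt (i : ι) : (ι → α) ≃ᵐ α × ({j // j ≠ i} → α) :=
  (piEquivPiSubtypeProd (fun _ => α) (· = i)).trans
    ((funUnique {j // j = i} α).prodCongr (refl _))

@[simp]
theorem funSplitAt_symm_apply_self (i : ι) (t : α) (y : {j // j ≠ i} → α) :
    (funSplitAt i).symm (t, y) i = t :=
  dif_pos rfl

@[simp]
theorem funSplitAt_symm_apply_of_ne {i j : ι} (h : j ≠ i) (t : α) (y : {j // j ≠ i} → α) :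
    (funSplitAt i).symm (t, y) j = y ⟨j, h⟩ :=
  dif_neg h

theorem update_funSplitAt_symm (i : ι) (t s : α) (y : {j // j ≠ i} → α) :
    Function.update ((funSplitAt i).symm (t, y)) i s = (funSplitAt i).symm (s, y) := by
  ext j
  rcases eq_or_ne j i with rfl | h <;> simp [*]

theorem funSplitAt_symm_update {i j : ι} (hj : j ≠ i) (t s : α) (y : {j // j ≠ i} → α) :
    (funSplitAt i).symm (t, Function.update y ⟨j, hj⟩ s) =
      Function.update ((funSplitAt i).symm (t, y)) j s := by
  ext l
  rcases eq_or_ne l i with rfl | hi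
  · simp [Function.update_of_ne (Ne.symm hj)]
  rcases eq_or_ne l j with rfl | hlj
  · simp [hi]
  · rw [funSplitAt_symm_apply_of_ne hi, Function.update_of_ne hlj, funSplitAt_symm_apply_of_ne hi,
      Function.update_of_ne (Subtype.coe_ne_coe.1 hlj)]

end

end MeasurableEquiv

open MeasurableEquiv

section FunSplitAt

variable {ι : Type*} [Fintype ι] [DecidableEq ι]
  {α : Type*} [MeasureSpace α] [SigmaFinite (volume : Measure α)]

theorem volume_preserving_funSplitAt (i : ι) :
    MeasurePreserving (funSplitAt (α := α) i) volume (volume.prod volume) := by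
  refine ((volume_preserving_funUnique {j // j = i} α).prod
    (MeasurePreserving.id (volume : Measure ({j // j ≠ i} → α)))).comp ?_
  convert volume_preserving_piEquivPiSubtypeProd (fun _ : ι => α) (· = i)
  · rfl
  · rfl
  · -- the two sides use different `Fintype {j // j = i}` instances
    congr
    exact Subsingleton.elim _ _

variable {E : Type*} [NormedAddCommGroup E]

theorem integrable_comp_funSplitAt_symm_iff (i : ι) {F : (ι → α) → E} :
    Integrable (fun z => F ((funSplitAt i).symm z)) (volume.prod volume) ↔ Integrable F :=
  (volume_preserving_funSplitAt i).symm.integrable_comp_emb (MeasurableEquiv.measurableEmbedding _)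

theorem ae_integrable_funSplitAt_symm (i : ι) {F : (ι → α) → E} (hF : Integrable F) :
    ∀ᵐ t, Integrable (fun y => F ((funSplitAt i).symm (t, y))) :=
  ((integrable_comp_funSplitAt_symm_iff i).2 hF).prod_right_ae

variable [NormedSpace ℝ E]

theorem integral_comp_funSplitAt_symm (i : ι) (F : (ι → α) → E) :
    ∫ z, F ((funSplitAt i).symm z) ∂(volume.prod volume) = ∫ ξ, F ξ :=
  (volume_preserving_funSplitAt i).symm.integral_comp' F

theorem integral_integral_funSplitAt_symm (i : ι) {F : (ι → α) → E} (hF : Integrable F) :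
    ∫ t, ∫ y, F ((funSplitAt i).symm (t, y)) = ∫ ξ, F ξ := by
  rw [← integral_comp_funSplitAt_symm i,
    integral_prod _ ((integrable_comp_funSplitAt_symm_iff i).2 hF)]

theorem integral_integral_funSplitAt_symm_swap (i : ι) {F : (ι → α) → E} (hF : Integrable F) :
    ∫ y, ∫ t, F ((funSplitAt i).symm (t, y)) = ∫ ξ, F ξ := by
  rw [← integral_comp_funSplitAt_symm i,
    integral_prod_symm _ ((integrable_comp_funSplitAt_symm_iff i).2 hF)]

theorem integrable_integral_funSplitAt_symm (i : ι) {F : (ι → α) → E} (hF : Integrable F) :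
    Integrable (fun t => ∫ y, F ((funSplitAt i).symm (t, y))) :=
  ((integrable_comp_funSplitAt_symm_iff i).2 hF).integral_prod_left

theorem ae_ae_funSplitAt_symm (i : ι) {P : (ι → α) → Prop} (h : ∀ᵐ ξ, P ξ) :
    ∀ᵐ t, ∀ᵐ y, P ((funSplitAt i).symm (t, y)) :=
  Measure.ae_ae_of_ae_prod ((volume_preserving_funSplitAt i).symm.quasiMeasurePreserving.ae h)

theorem integral_mul_integral_update (j : ι) {F : (ι → α) → ℝ} (hF : Integrable F) (K : α → ℝ) :
    ∫ y, K (y j) * ∫ s, F (Function.update y j s) = (∫ t, K t) * ∫ ξ, F ξ := by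
  rw [← integral_comp_funSplitAt_symm j, ← integral_integral_funSplitAt_symm_swap j hF,
    ← integral_prod_mul]
  congr 1 with ⟨t, y⟩
  simp only [funSplitAt_symm_apply_self, update_funSplitAt_symm]

theorem integrable_mul_integral_update (j : ι) {F : (ι → α) → ℝ} (hF : Integrable F) {K : α → ℝ}
    (hK : Integrable K) :
    Integrable (fun y => K (y j) * ∫ s, F (Function.update y j s)) := by
  rw [← integrable_comp_funSplitAt_symm_iff j]
  refine (hK.mul_prod ((integrable_comp_funSplitAt_symm_iff j).2 hF).integral_prod_right).congr ?_
  refine .of_forall fun ⟨t, y⟩ => ?_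
  simp only [funSplitAt_symm_apply_self, update_funSplitAt_symm]

end FunSplitAt

section Marginals

variable {n : ℕ}

theorem margC_eq_integral_funSplitAt_symm (i : Fin n) (F : (Fin n → ℝ) → ℝ) (t : ℝ) :
    margC i F t = ∫ y, F ((funSplitAt i).symm (t, y)) :=
  rfl

theorem integral_margC (i : Fin n) {F : (Fin n → ℝ) → ℝ} (hF : Integrable F) :
    ∫ t, margC i F t = ∫ ξ, F ξ :=
  integral_integral_funSplitAt_symm i hF

theorem integrable_margC (i : Fin n) {F : (Fin n → ℝ) → ℝ} (hF : Integrable F) :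
    Integrable (margC i F) :=
  integrable_integral_funSplitAt_symm i hF

theorem ae_abs_margC_le (i : Fin n) {F G : (Fin n → ℝ) → ℝ} {C : ℝ} (hG : Integrable G)
    (h : ∀ᵐ ξ, |F ξ| ≤ C * G ξ) : ∀ᵐ t, |margC i F t| ≤ C * margC i G t := by
  filter_upwards [ae_ae_funSplitAt_symm i h, ae_integrable_funSplitAt_symm i hG] with t ht hGt
  rw [margC_eq_integral_funSplitAt_symm, margC_eq_integral_funSplitAt_symm, ← integral_const_mul]
  exact norm_integral_le_of_norm_le (f := fun y => F ((funSplitAt i).symm (t, y)))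
    (hGt.const_mul C) ht

theorem margC_mul_margO_self (i : Fin n) {G : (Fin n → ℝ) → ℝ} (hG : Integrable G) (K : ℝ → ℝ)
    (t : ℝ) : margC i (fun ξ => K (ξ i) * margO i G ξ) t = K t * ∫ ξ, G ξ := by
  simp only [margC_eq_integral_funSplitAt_symm, margO, funSplitAt_symm_apply_self,
    update_funSplitAt_symm]
  rw [integral_const_mul, integral_integral_funSplitAt_symm_swap i hG]

theorem margC_mul_margO_of_ne {i j : Fin n} (hji : j ≠ i) {G : (Fin n → ℝ) → ℝ} {t : ℝ}
    (hG : Integrable fun y => G ((funSplitAt i).symm (t, y))) (K : ℝ → ℝ) :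
    margC i (fun ξ => K (ξ j) * margO j G ξ) t = (∫ s, K s) * margC i G t := by
  simp only [margC_eq_integral_funSplitAt_symm, margO, funSplitAt_symm_apply_of_ne hji,
    ← funSplitAt_symm_update hji]
  exact integral_mul_integral_update _ hG K

theorem integrable_mul_margO (j : Fin n) {G : (Fin n → ℝ) → ℝ} (hG : Integrable G) {K : ℝ → ℝ}
    (hK : Integrable K) : Integrable fun ξ => K (ξ j) * margO j G ξ :=
  integrable_mul_integral_update j hG hK

variable {I : Fin n → Set ℝ} {G : (Fin n → ℝ) → ℝ}

theorem margC_eq_zero_of_notMem (hG : ∀ ξ ∉ Set.univ.pi I, G ξ = 0) {i : Fin n} {t : ℝ}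
    (ht : t ∉ I i) : margC i G t = 0 := by
  have hzero : ∀ y, G ((funSplitAt i).symm (t, y)) = 0 := fun y =>
    hG _ fun h => ht (by simpa using Set.mem_univ_pi.1 h i)
  simp [margC_eq_integral_funSplitAt_symm, hzero]

theorem margO_eq_zero_of_notMem (hG : ∀ ξ ∉ Set.univ.pi I, G ξ = 0) {ξ : Fin n → ℝ} {j m : Fin n}
    (hmj : m ≠ j) (hm : ξ m ∉ I m) : margO j G ξ = 0 := by
  have hzero : ∀ s, G (Function.update ξ j s) = 0 := fun s =>
    hG _ fun h => hm (by simpa [Function.update_of_ne hmj] using Set.mem_univ_pi.1 h m)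
  simp [margO, hzero]

theorem margC_mul_margO_eq_zero_of_notMem {F : (Fin n → ℝ) → ℝ}
    (hF : ∀ ξ ∉ Set.univ.pi I, F ξ = 0) (hG : ∀ ξ ∉ Set.univ.pi I, G ξ = 0) {ξ : Fin n → ℝ}
    (hξ : ξ ∉ Set.univ.pi I) (j : Fin n) : margC j F (ξ j) * margO j G ξ = 0 := by
  obtain ⟨m, hm⟩ : ∃ m, ξ m ∉ I m := by simpa [Set.mem_univ_pi] using hξ
  rcases eq_or_ne m j with rfl | hmj
  · rw [margC_eq_zero_of_notMem hF hm, zero_mul]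
  · rw [margO_eq_zero_of_notMem hG hmj hm, mul_zero]

end Marginals

namespace IsDensityOn

variable {n : ℕ} {w : (Fin n → ℝ) → ℝ} {U : Set (Fin n → ℝ)}

theorem nonneg (hw : IsDensityOn w U) (ξ : Fin n → ℝ) : 0 ≤ w ξ := by
  by_cases hξ : ξ ∈ U
  · exact (hw.pos ξ hξ).le
  · exact (hw.zero ξ hξ).ge

theorem integrable (hw : IsDensityOn w U) : Integrable w :=
  Integrable.of_integral_ne_zero (by simp [hw.integral_one])

theorem isProbabilityMeasure_wMeasure (hw : IsDensityOn w U) :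
    IsProbabilityMeasure (wMeasure w) := by
  constructor
  rw [wMeasure, withDensity_apply _ .univ, Measure.restrict_univ,
    ← ofReal_integral_eq_lintegral_ofReal hw.integrable (.of_forall hw.nonneg), hw.integral_one,
    ENNReal.ofReal_one]

theorem integrable_mul_of_memLp_top (hw : IsDensityOn w U) {ψ : (Fin n → ℝ) → ℝ}
    (hψ : MemLp ψ ⊤ (wMeasure w)) : Integrable fun ξ => ψ ξ * w ξ := by
  have := hw.isProbabilityMeasure_wMeasure
  have h := hψ.integrable le_top
  rw [wMeasure, integrable_withDensity_iff hw.measurable.ennreal_ofReal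
    (.of_forall fun _ => ENNReal.ofReal_lt_top)] at h
  simpa only [ENNReal.toReal_ofReal (hw.nonneg _)] using h

theorem exists_ae_abs_mul_le (hw : IsDensityOn w U) {ψ : (Fin n → ℝ) → ℝ}
    (hψ : MemLp ψ ⊤ (wMeasure w)) : ∃ C, ∀ᵐ ξ, |ψ ξ * w ξ| ≤ C * w ξ := by
  have hψ_top : eLpNormEssSup ψ (wMeasure w) < ⊤ := by simpa using hψ.2
  obtain ⟨C, hC⟩ := eLpNormEssSup_lt_top_iff_isBoundedUnder.1 hψ_top
  refine ⟨C, ?_⟩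
  filter_upwards [(ae_withDensity_iff hw.measurable.ennreal_ofReal).1 (Filter.eventually_map.1 hC)]
    with ξ hξ
  rcases (hw.nonneg ξ).eq_or_lt with h0 | hpos
  · simp [← h0]
  · rw [abs_mul, abs_of_pos hpos]
    gcongr
    simpa using NNReal.coe_le_coe.2 (hξ (by simpa using hpos))

end IsDensityOn

section PsiTilde

variable {n : ℕ} {w : (Fin n → ℝ) → ℝ}

def psiTilde (w ψ : (Fin n → ℝ) → ℝ) (ξ : Fin n → ℝ) : ℝ :=
  ψ ξ - (∑ i : Fin n, margO i w ξ / w ξ * margC i (fun η => ψ η * w η) (ξ i)) +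
    ((n : ℝ) - 1) * ∫ η, ψ η * w η

theorem psiTilde_mul_eq {I : Fin n → Set ℝ} (hw : IsDensityOn w (Set.univ.pi I))
    (ψ : (Fin n → ℝ) → ℝ) (ξ : Fin n → ℝ) :
    psiTilde w ψ ξ * w ξ = ψ ξ * w ξ -
      (∑ j, margC j (fun η => ψ η * w η) (ξ j) * margO j w ξ) +
      ((n : ℝ) - 1) * (∫ η, ψ η * w η) * w ξ := by
  rcases eq_or_ne (w ξ) 0 with h0 | h0
  · have hξ : ξ ∉ Set.univ.pi I := fun h => (hw.pos ξ h).ne' h0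
    have hψw : ∀ η ∉ Set.univ.pi I, ψ η * w η = 0 := fun η hη => by rw [hw.zero η hη, mul_zero]
    simp [h0, margC_mul_margO_eq_zero_of_notMem hψw hw.zero hξ]
  · have hterm : ∀ j, margO j w ξ / w ξ * margC j (fun η => ψ η * w η) (ξ j) * w ξ =
        margC j (fun η => ψ η * w η) (ξ j) * margO j w ξ := fun j => by
      field_simp
    simp only [psiTilde, add_mul, sub_mul, Finset.sum_mul, hterm]

theorem ae_margC_psiTilde_mul_eq_zero {I : Fin n → Set ℝ} (hw : IsDensityOn w (Set.univ.pi I))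
    {ψ : (Fin n → ℝ) → ℝ} (hψw : Integrable fun η => ψ η * w η) (i : Fin n) :
    ∀ᵐ t, margC i (fun ξ => psiTilde w ψ ξ * w ξ) t = 0 := by
  set F : (Fin n → ℝ) → ℝ := fun η => ψ η * w η
  set H : Fin n → (Fin n → ℝ) → ℝ := fun j ξ => margC j F (ξ j) * margO j w ξ
  have hH : ∀ j, Integrable (H j) := fun j =>
    integrable_mul_margO j hw.integrable (integrable_margC j hψw)
  filter_upwards [ae_integrable_funSplitAt_symm i hψw,
    ae_integrable_funSplitAt_symm i hw.integrable, ae_all_iff.2 fun j => ae_integrable_funSplitAt_symm i (hH j)] with t hFt hwt hHt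
  have hHi : ∀ j, margC i (H j) t =
      (∫ ξ, F ξ) * margC i w t + if j = i then margC i F t - (∫ ξ, F ξ) * margC i w t else 0 := by
    intro j
    rcases eq_or_ne j i with rfl | hji
    · simp [H, margC_mul_margO_self j hw.integrable, hw.integral_one]
    · simp [H, margC_mul_margO_of_ne hji hwt, integral_margC j hψw, hji]
  have hexp : (fun ξ => psiTilde w ψ ξ * w ξ) =
      fun ξ => F ξ - ∑ j, H j ξ + ((n : ℝ) - 1) * (∫ ξ, F ξ) * w ξ :=
    funext (psiTilde_mul_eq hw ψ)
  have hHsum := integrable_finsetSum Finset.univ fun j _ => hHt j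
  calc margC i (fun ξ => psiTilde w ψ ξ * w ξ) t
      = margC i F t - ∑ j, margC i (H j) t + ((n : ℝ) - 1) * (∫ ξ, F ξ) * margC i w t := by
        rw [hexp, margC_eq_integral_funSplitAt_symm, integral_add, integral_sub hFt hHsum,
          integral_finsetSum _ fun j _ => hHt j, integral_const_mul]
        · rfl
        · exact hFt.sub hHsum
        · exact hwt.const_mul _
    _ = 0 := by
        simp only [hHi, Finset.sum_add_distrib, Finset.sum_ite_eq', Finset.mem_univ, if_true,
          Finset.sum_const, Finset.card_univ, Fintype.card_fin, nsmul_eq_mul]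
        ring

theorem memLp_margO_div_mul_margC {U : Set (Fin n → ℝ)} (hw : IsDensityOn w U) {p : ℝ}
    (hstar : StarCondition w p) {F : (Fin n → ℝ) → ℝ} (hF : Integrable F) {C : ℝ}
    (hC : ∀ᵐ ξ, |F ξ| ≤ C * w ξ) (j : Fin n) :
    MemLp (fun ξ => margO j w ξ / w ξ * margC j F (ξ j)) (ENNReal.ofReal p) (wMeasure w) := by
  have hac : wMeasure w ≪ volume := withDensity_absolutelyContinuous _ _
  refine (hstar j).of_le_mul (c := C) ?_ (hac.ae_le ?_)
  · have hH := integrable_mul_margO j hw.integrable (integrable_margC j hF)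
    refine ((hH.aemeasurable.div hw.measurable.aemeasurable).aestronglyMeasurable.congr
      (.of_forall fun ξ => ?_)).mono_ac hac
    simp only [Pi.div_apply]
    ring
  · filter_upwards [(Measure.quasiMeasurePreserving_eval _ j).ae
      (ae_abs_margC_le j hw.integrable hC)] with ξ hξ
    have hk : 0 ≤ margC j w (ξ j) := integral_nonneg fun _ => hw.nonneg _
    rw [Real.norm_eq_abs, Real.norm_eq_abs, abs_mul, mul_div_assoc, abs_mul, abs_of_nonneg hk]
    calc |margO j w ξ / w ξ| * |margC j F (ξ j)|
        ≤ |margO j w ξ / w ξ| * (C * margC j w (ξ j)) := by gcongr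
      _ = C * (margC j w (ξ j) * |margO j w ξ / w ξ|) := by ring

theorem memLp_psiTilde {U : Set (Fin n → ℝ)} (hw : IsDensityOn w U) {p : ℝ}
    (hstar : StarCondition w p) {ψ : (Fin n → ℝ) → ℝ} (hψ : MemLp ψ ⊤ (wMeasure w)) :
    MemLp (psiTilde w ψ) (ENNReal.ofReal p) (wMeasure w) := by
  have := hw.isProbabilityMeasure_wMeasure
  obtain ⟨C, hC⟩ := hw.exists_ae_abs_mul_le hψ
  have hterm := memLp_margO_div_mul_margC hw hstar (hw.integrable_mul_of_memLp_top hψ) hC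
  exact ((hψ.mono_exponent le_top).sub (memLp_finsetSum _ fun j _ => hterm j)).add
    (memLp_const _)

end PsiTilde

theorem psi_tilde_mem_N_general
    {n : ℕ} (I : Fin n → Set ℝ)
    (U : Set (Fin n → ℝ)) (hU : U = Set.univ.pi I)
    (w : (Fin n → ℝ) → ℝ) (hw : IsDensityOn w U)
    (p : ℝ) (hstar : StarCondition w p)
    (ψ : (Fin n → ℝ) → ℝ) (hψ : MemLp ψ ⊤ (wMeasure w)) :
    MemN w p (fun ξ => ψ ξ -
      (∑ i : Fin n, margO i w ξ / w ξ * margC i (fun η => ψ η * w η) (ξ i)) +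
      ((n : ℝ) - 1) * ∫ η, ψ η * w η) := by
  subst hU
  exact ⟨memLp_psiTilde hw hstar hψ,
    ae_margC_psiTilde_mul_eq_zero hw (hw.integrable_mul_of_memLp_top hψ)⟩

/-- Lemma `lem: lem2` (3): under condition (★), for every `ψ ∈ L^∞` the
function `ψ̃ = ψ - ∑ᵢ (wᵢᶜ/w)·∫ψ w dξᵢᶜ + (n-1)∫ψ w` belongs to `N`. -/
theorem psi_tilde_mem_N
    {n : ℕ} (hn : 1 ≤ n) (I : Fin n → Set ℝ) (hI : ∀ i, IsClosedIntervalType (I i))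
    (U : Set (Fin n → ℝ)) (hU : U = Set.univ.pi I)
    (w : (Fin n → ℝ) → ℝ) (hw : IsDensityOn w U)
    (p : ℝ) (hp : 1 < p) (hstar : StarCondition w p)
    (ψ : (Fin n → ℝ) → ℝ) (hψ : MemLp ψ ⊤ (wMeasure w)) :
    MemN w p (fun ξ => ψ ξ -
      (∑ i : Fin n, margO i w ξ / w ξ * margC i (fun η => ψ η * w η) (ξ i)) +
      ((n : ℝ) - 1) * ∫ η, ψ η * w η) :=
  psi_tilde_mem_N_general I U hU w hw p hstar ψ hψ
end
end

section
/- Let 1 < p < ∞ with conjugate exponent q = p/(p-1), let w be a strictly positive density on U, and let f ∈ L^q(w). Then the following are equivalent: (i) ‖sign(f)|f|^{1/(p−1)} + φ‖_p ≥ ‖sign(f)|f|^{1/(p−1)}‖_p for all φ ∈ N (note ‖sign(f)|f|^{1/(p−1)}‖_p = ‖f‖_q^{q/p}); (ii) ∫_U f(ξ)φ(ξ)w(ξ)dξ = 0 for all φ ∈ N. -/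
/-!
Write `g = sign(f)|f|^{1/(p-1)}`, so that `f g = |g|^p = |f|^q` and `|g|^{p-2} g = f`.

If `∫ f φ = 0`, Hölder gives
`‖g‖_p^p = ∫ f (g + φ) ≤ ‖f‖_q ‖g + φ‖_p = ‖g‖_p^{p-1} ‖g + φ‖_p`.
Conversely `N` is a cone, so if `g` minimises the norm on `g + N` then `t ↦ ∫ |g + tφ|^p`
has a minimum at `t = 0`; differentiating under the integral (dominated by
`p (|g| + |φ|)^{p-1} |φ| ∈ L^1`) its derivative there is `p ∫ |g|^{p-2} g φ = p ∫ f φ`.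
-/

open MeasureTheory

noncomputable section

namespace Real

lemma sign_mul_abs (x : ℝ) : sign x * |x| = x := by
  rcases lt_trichotomy x 0 with hx | rfl | hx
  · simp [sign_of_neg hx, abs_of_neg hx]
  · simp
  · simp [sign_of_pos hx, abs_of_pos hx]

lemma mul_sign_self (x : ℝ) : x * sign x = |x| := by
  rcases lt_trichotomy x 0 with hx | rfl | hx
  · simp [sign_of_neg hx, abs_of_neg hx]
  · simp
  · simp [sign_of_pos hx, abs_of_pos hx]

end Real

def dualPow (p x : ℝ) : ℝ := Real.sign x * |x| ^ (1 / (p - 1))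

section DualPow

variable {p : ℝ}

lemma measurable_dualPow (p : ℝ) : Measurable (dualPow p) := by
  have hsign : Measurable Real.sign :=
    Measurable.ite measurableSet_Iio measurable_const
      (Measurable.ite measurableSet_Ioi measurable_const measurable_const)
  exact hsign.mul (measurable_abs.pow_const _)

lemma abs_dualPow (hp : p ≠ 1) (x : ℝ) : |dualPow p x| = |x| ^ (1 / (p - 1)) := by
  have hr : 1 / (p - 1) ≠ 0 := one_div_ne_zero (sub_ne_zero.2 hp)
  rcases lt_trichotomy x 0 with hx | rfl | hx
  · simp [dualPow, Real.sign_of_neg hx, abs_of_nonneg (Real.rpow_nonneg (abs_nonneg x) _)]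
  · rw [dualPow, Real.sign_zero, zero_mul, abs_zero, Real.zero_rpow hr]
  · simp [dualPow, Real.sign_of_pos hx, abs_of_nonneg (Real.rpow_nonneg (abs_nonneg x) _)]

lemma mul_dualPow (hp : 1 < p) (x : ℝ) : x * dualPow p x = |dualPow p x| ^ p := by
  have hp1 : p - 1 ≠ 0 := (sub_pos.2 hp).ne'
  rw [abs_dualPow hp.ne', ← Real.rpow_mul (abs_nonneg x), dualPow, ← mul_assoc,
    Real.mul_sign_self, ← Real.rpow_one_add' (abs_nonneg x)]
  · congr 1; field_simp; ring
  · exact (add_pos one_pos (one_div_pos.2 (sub_pos.2 hp))).ne'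

lemma abs_dualPow_rpow_sub_two_mul_dualPow (hp : p ≠ 1) (x : ℝ) :
    |dualPow p x| ^ (p - 2) * dualPow p x = x := by
  have hp1 : p - 1 ≠ 0 := sub_ne_zero.2 hp
  have hexp : 1 / (p - 1) * (p - 2) + 1 / (p - 1) = 1 := by field_simp; ring
  rw [abs_dualPow hp, dualPow, mul_left_comm, ← Real.rpow_mul (abs_nonneg x),
    ← Real.rpow_add' (abs_nonneg x) (by rw [hexp]; exact one_ne_zero), hexp, Real.rpow_one,
    Real.sign_mul_abs]

lemma abs_dualPow_rpow (hp : p ≠ 1) (x : ℝ) : |dualPow p x| ^ p = |x| ^ (p / (p - 1)) := by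
  rw [abs_dualPow hp, ← Real.rpow_mul (abs_nonneg x), one_div_mul_eq_div]

lemma abs_rpow_sub_two_mul_self (hp : p ≠ 1) (u : ℝ) :
    |(|u| ^ (p - 2) * u)| = |u| ^ (p - 1) := by
  rw [abs_mul, abs_of_nonneg (Real.rpow_nonneg (abs_nonneg u) _),
    ← Real.rpow_add_one' (abs_nonneg u) (by contrapose! hp; linarith)]
  ring_nf

end DualPow

lemma le_of_le_rpow_mul_rpow {p q A B : ℝ} (hpq : p.HolderConjugate q) (hA : 0 ≤ A)
    (hB : 0 ≤ B) (h : A ≤ A ^ (1 / q) * B ^ (1 / p)) : A ≤ B := by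
  rcases hA.eq_or_lt with rfl | hA
  · exact hB
  have hsplit : A ^ (1 / q) * A ^ (1 / p) = A := by
    rw [← Real.rpow_add hA, add_comm, hpq.one_div_add_one_div, div_one, Real.rpow_one]
  have h' := le_of_mul_le_mul_left (hsplit.trans_le h) (Real.rpow_pos_of_pos hA _)
  exact (Real.rpow_le_rpow_iff hA.le hB hpq.one_div_pos).1 h'

namespace MeasureTheory

open Filter

variable {α : Type*} [MeasurableSpace α] {μ : Measure α} {p q : ℝ}

lemma MemLp.norm_rpow_sub_one {E : Type*} [NormedAddCommGroup E] (hpq : p.HolderConjugate q)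
    {f : α → E} (hf : MemLp f (ENNReal.ofReal p) μ) :
    MemLp (fun x => ‖f x‖ ^ (p - 1)) (ENNReal.ofReal q) μ := by
  have h := hf.norm_rpow_div (ENNReal.ofReal (p - 1))
  rwa [ENNReal.toReal_ofReal hpq.sub_one_pos.le, ← ENNReal.ofReal_div_of_pos hpq.sub_one_pos,
    ← hpq.conjugate_eq] at h

lemma MemLp.dualPow (hpq : p.HolderConjugate q) {f : α → ℝ}
    (hf : MemLp f (ENNReal.ofReal q) μ) :
    MemLp (fun x => dualPow p (f x)) (ENNReal.ofReal p) μ := by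
  have hq1 : q - 1 = 1 / (p - 1) := by
    rw [hpq.conjugate_eq]; field_simp [hpq.sub_one_ne_zero]; ring
  refine (hf.norm_rpow_sub_one hpq.symm).of_le
    ((measurable_dualPow p).comp_aemeasurable hf.1.aemeasurable).aestronglyMeasurable
    (Eventually.of_forall fun x => ?_)
  simp only [Real.norm_eq_abs, abs_dualPow hpq.lt.ne', hq1,
    abs_of_nonneg (Real.rpow_nonneg (abs_nonneg (f x)) _), le_refl]

lemma MemLp.eLpNorm_le_eLpNorm_iff {E : Type*} [NormedAddCommGroup E] (hp : 0 < p)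
    {g h : α → E} (hg : MemLp g (ENNReal.ofReal p) μ) (hh : MemLp h (ENNReal.ofReal p) μ) :
    eLpNorm g (ENNReal.ofReal p) μ ≤ eLpNorm h (ENNReal.ofReal p) μ ↔
      ∫ x, ‖g x‖ ^ p ∂μ ≤ ∫ x, ‖h x‖ ^ p ∂μ := by
  have hp0 : ENNReal.ofReal p ≠ 0 := ENNReal.ofReal_ne_zero_iff.2 hp
  have hint_nonneg (k : α → E) : 0 ≤ ∫ x, ‖k x‖ ^ p ∂μ :=
    integral_nonneg fun x => Real.rpow_nonneg (norm_nonneg _) _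
  rw [hg.eLpNorm_eq_integral_rpow_norm hp0 ENNReal.ofReal_ne_top,
    hh.eLpNorm_eq_integral_rpow_norm hp0 ENNReal.ofReal_ne_top, ENNReal.toReal_ofReal hp.le,
    ENNReal.ofReal_le_ofReal_iff (Real.rpow_nonneg (hint_nonneg h) _),
    Real.rpow_le_rpow_iff (hint_nonneg g) (hint_nonneg h) (inv_pos.2 hp)]

lemma hasDerivAt_integral_norm_add_mul_rpow (hp : 1 < p) {g φ : α → ℝ}
    (hg : MemLp g (ENNReal.ofReal p) μ) (hφ : MemLp φ (ENNReal.ofReal p) μ) :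
    HasDerivAt (fun t => ∫ x, ‖g x + t * φ x‖ ^ p ∂μ)
      (p * ∫ x, ‖g x‖ ^ (p - 2) * g x * φ x ∂μ) 0 := by
  have hpq := Real.HolderConjugate.conjExponent hp
  have := hpq.symm.ennrealOfReal
  have hp0 : 0 < p := by linarith
  have hF_meas (t : ℝ) : AEStronglyMeasurable (fun x => ‖g x + t * φ x‖ ^ p) μ :=
    ((hg.1.add (hφ.1.const_mul t)).norm.aemeasurable.pow_const p).aestronglyMeasurable
  have hF_int : Integrable (fun x => ‖g x + 0 * φ x‖ ^ p) μ := by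
    simpa [ENNReal.toReal_ofReal hp0.le] using
      hg.integrable_norm_rpow (ENNReal.ofReal_ne_zero_iff.2 hp0) ENNReal.ofReal_ne_top
  have hF'_meas : AEStronglyMeasurable
      (fun x => p * ‖g x + 0 * φ x‖ ^ (p - 2) * (g x + 0 * φ x) * φ x) μ := by
    have := hg.1.aemeasurable; have := hφ.1.aemeasurable
    exact (by fun_prop : AEMeasurable _ μ).aestronglyMeasurable
  have h_bound : ∀ᵐ x ∂μ, ∀ t ∈ Metric.ball (0 : ℝ) 1,
      ‖p * ‖g x + t * φ x‖ ^ (p - 2) * (g x + t * φ x) * φ x‖ ≤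
        p * (‖g x‖ + ‖φ x‖) ^ (p - 1) * ‖φ x‖ := by
    refine Eventually.of_forall fun x t ht => ?_
    have ht1 : |t| ≤ 1 := by simpa using (Metric.mem_ball.1 ht).le
    have hu : |g x + t * φ x| ≤ |g x| + |φ x| := by
      have : |t * φ x| ≤ |φ x| := by
        rw [abs_mul]; exact mul_le_of_le_one_left (abs_nonneg _) ht1
      exact (abs_add_le _ _).trans (by linarith)
    simp only [Real.norm_eq_abs]
    rw [mul_assoc p, abs_mul, abs_mul, abs_rpow_sub_two_mul_self hp.ne', abs_of_pos hp0]
    exact mul_le_mul_of_nonneg_right (mul_le_mul_of_nonneg_left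
      (Real.rpow_le_rpow (abs_nonneg _) hu (by linarith)) hp0.le) (abs_nonneg _)
  have hbound_int :
      Integrable (fun x => p * (‖g x‖ + ‖φ x‖) ^ (p - 1) * ‖φ x‖) μ := by
    refine (((hg.norm.add hφ.norm).norm_rpow_sub_one hpq).integrable_mul hφ.norm).const_mul p
      |>.congr (Eventually.of_forall fun x => ?_)
    simp only [Pi.mul_apply, Pi.add_apply, mul_assoc,
      Real.norm_of_nonneg (add_nonneg (norm_nonneg (g x)) (norm_nonneg (φ x)))]
  have h_diff : ∀ᵐ x ∂μ, ∀ t ∈ Metric.ball (0 : ℝ) 1,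
      HasDerivAt (fun t => ‖g x + t * φ x‖ ^ p)
        (p * ‖g x + t * φ x‖ ^ (p - 2) * (g x + t * φ x) * φ x) t := by
    refine Eventually.of_forall fun x t _ => ?_
    have hinner : HasDerivAt (fun s => g x + s * φ x) (φ x) t := by
      simpa using ((hasDerivAt_id t).mul_const (φ x)).const_add (g x)
    exact (hasDerivAt_norm_rpow _ hp).comp t hinner
  have h := (hasDerivAt_integral_of_dominated_loc_of_deriv_le (Metric.ball_mem_nhds 0 one_pos)
    (Eventually.of_forall hF_meas) hF_int hF'_meas h_bound hbound_int h_diff).2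
  have hF'_zero : (fun x => p * ‖g x + 0 * φ x‖ ^ (p - 2) * (g x + 0 * φ x) * φ x) =
      fun x => p * (‖g x‖ ^ (p - 2) * g x * φ x) := by
    ext x; simp only [zero_mul, add_zero]; ring
  rwa [hF'_zero, integral_const_mul] at h

lemma integral_norm_rpow_sub_two_mul_eq_zero_of_forall_eLpNorm_le (hp : 1 < p) {g φ : α → ℝ}
    (hg : MemLp g (ENNReal.ofReal p) μ) (hφ : MemLp φ (ENNReal.ofReal p) μ)
    (hmin : ∀ t : ℝ,
      eLpNorm g (ENNReal.ofReal p) μ ≤ eLpNorm (fun x => g x + t * φ x) (ENNReal.ofReal p) μ) :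
    ∫ x, ‖g x‖ ^ (p - 2) * g x * φ x ∂μ = 0 := by
  have hloc : IsLocalMin (fun t => ∫ x, ‖g x + t * φ x‖ ^ p ∂μ) 0 :=
    Eventually.of_forall fun t => by
      simpa using (hg.eLpNorm_le_eLpNorm_iff (by linarith) (hg.add (hφ.const_mul t))).1 (hmin t)
  have h := hloc.hasDerivAt_eq_zero (hasDerivAt_integral_norm_add_mul_rpow hp hg hφ)
  exact (mul_eq_zero.1 h).resolve_left (by linarith)

lemma eLpNorm_dualPow_le_eLpNorm_add (hpq : p.HolderConjugate q) {f φ : α → ℝ}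
    (hf : MemLp f (ENNReal.ofReal q) μ) (hφ : MemLp φ (ENNReal.ofReal p) μ)
    (horth : ∫ x, f x * φ x ∂μ = 0) :
    eLpNorm (fun x => dualPow p (f x)) (ENNReal.ofReal p) μ ≤
      eLpNorm (fun x => dualPow p (f x) + φ x) (ENNReal.ofReal p) μ := by
  have := hpq.symm.ennrealOfReal
  have hg := hf.dualPow hpq
  have hfg : Integrable (fun x => f x * dualPow p (f x)) μ := hf.integrable_mul hg
  have hfφ : Integrable (fun x => f x * φ x) μ := hf.integrable_mul hφ
  have hfgφ : Integrable (fun x => f x * (dualPow p (f x) + φ x)) μ :=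
    hf.integrable_mul (hg.add hφ)
  rw [hg.eLpNorm_le_eLpNorm_iff (h := fun x => dualPow p (f x) + φ x) hpq.pos (hg.add hφ)]
  refine le_of_le_rpow_mul_rpow hpq (integral_nonneg fun x => by positivity)
    (integral_nonneg fun x => by positivity) ?_
  calc ∫ x, ‖dualPow p (f x)‖ ^ p ∂μ = ∫ x, f x * (dualPow p (f x) + φ x) ∂μ := by
        simp_rw [mul_add]
        rw [integral_add hfg hfφ, horth, add_zero]
        simp_rw [mul_dualPow hpq.lt, Real.norm_eq_abs]
    _ ≤ ∫ x, ‖f x‖ * ‖dualPow p (f x) + φ x‖ ∂μ := by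
        exact integral_mono hfgφ (hfgφ.norm.congr (Eventually.of_forall fun x => norm_mul _ _))
          fun x => (le_abs_self _).trans (abs_mul _ _).le
    _ ≤ (∫ x, ‖f x‖ ^ q ∂μ) ^ (1 / q) *
          (∫ x, ‖dualPow p (f x) + φ x‖ ^ p ∂μ) ^ (1 / p) :=
        integral_mul_norm_le_Lp_mul_Lq hpq.symm hf (hg.add hφ)
    _ = _ := by
        simp_rw [Real.norm_eq_abs, abs_dualPow_rpow hpq.lt.ne', ← hpq.conjugate_eq]

end MeasureTheory

section Weighted

variable {n : ℕ} {w : (Fin n → ℝ) → ℝ}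

lemma IsDensityOn.nonneg_s6 {U : Set (Fin n → ℝ)} (hw : IsDensityOn w U) (ξ : Fin n → ℝ) :
    0 ≤ w ξ := by
  by_cases hξ : ξ ∈ U
  · exact (hw.pos ξ hξ).le
  · exact (hw.zero ξ hξ).ge

lemma IsDensityOn.integral_wMeasure {U : Set (Fin n → ℝ)} (hw : IsDensityOn w U)
    (h : (Fin n → ℝ) → ℝ) : ∫ ξ, h ξ ∂wMeasure w = ∫ ξ, h ξ * w ξ := by
  rw [wMeasure, integral_withDensity_eq_integral_toReal_smul hw.measurable.ennreal_ofReal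
    (Filter.Eventually.of_forall fun _ => ENNReal.ofReal_lt_top)]
  congr 1 with ξ
  rw [ENNReal.toReal_ofReal (hw.nonneg_s6 ξ), smul_eq_mul, mul_comm]

lemma MemN.const_mul {p : ℝ} {φ : (Fin n → ℝ) → ℝ} (hφ : MemN w p φ) (t : ℝ) :
    MemN w p (fun ξ => t * φ ξ) := by
  refine ⟨hφ.1.const_mul t, fun i => ?_⟩
  filter_upwards [hφ.2 i] with s hs
  simp only [margC, mul_assoc, integral_const_mul] at hs ⊢
  rw [hs, mul_zero]

end Weighted

theorem orthogonality_iff_minimality_general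
    {n : ℕ}
    (U : Set (Fin n → ℝ))
    (w : (Fin n → ℝ) → ℝ) (hw : IsDensityOn w U)
    (p q : ℝ) (hp : 1 < p) (hq : q = p / (p - 1))
    (f : (Fin n → ℝ) → ℝ) (hf : MemLp f (ENNReal.ofReal q) (wMeasure w)) :
    (∀ φ : (Fin n → ℝ) → ℝ, MemN w p φ →
        eLpNorm (fun ξ => Real.sign (f ξ) * |f ξ| ^ (1 / (p - 1))) (ENNReal.ofReal p)
            (wMeasure w) ≤
          eLpNorm (fun ξ => Real.sign (f ξ) * |f ξ| ^ (1 / (p - 1)) + φ ξ)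
            (ENNReal.ofReal p) (wMeasure w)) ↔
      (∀ φ : (Fin n → ℝ) → ℝ, MemN w p φ → (∫ ξ, f ξ * φ ξ * w ξ) = 0) := by
  have hpq : p.HolderConjugate q := hq ▸ Real.HolderConjugate.conjExponent hp
  constructor
  · intro hmin φ hφ
    rw [← hw.integral_wMeasure (fun ξ => f ξ * φ ξ)]
    have h := integral_norm_rpow_sub_two_mul_eq_zero_of_forall_eLpNorm_le hp (hf.dualPow hpq)
      hφ.1 fun t => hmin _ (hφ.const_mul t)
    simpa only [Real.norm_eq_abs, abs_dualPow_rpow_sub_two_mul_dualPow hp.ne'] using h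
  · intro horth φ hφ
    refine eLpNorm_dualPow_le_eLpNorm_add hpq hf hφ.1 ?_
    rw [hw.integral_wMeasure (fun ξ => f ξ * φ ξ)]
    exact horth φ hφ

/-- Corollary `cor: 1`, (i) ⇔ (ii): for `f ∈ L^q(w)`,
`‖sign(f)|f|^{1/(p-1)} + φ‖_p ≥ ‖sign(f)|f|^{1/(p-1)}‖_p` for all `φ ∈ N` iff
`∫ f φ w = 0` for all `φ ∈ N`. -/
theorem orthogonality_iff_minimality
    {n : ℕ} (hn : 1 ≤ n) (I : Fin n → Set ℝ) (hI : ∀ i, IsClosedIntervalType (I i))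
    (U : Set (Fin n → ℝ)) (hU : U = Set.univ.pi I)
    (w : (Fin n → ℝ) → ℝ) (hw : IsDensityOn w U)
    (p q : ℝ) (hp : 1 < p) (hq : q = p / (p - 1))
    (f : (Fin n → ℝ) → ℝ) (hf : MemLp f (ENNReal.ofReal q) (wMeasure w)) :
    (∀ φ : (Fin n → ℝ) → ℝ, MemN w p φ →
        eLpNorm (fun ξ => Real.sign (f ξ) * |f ξ| ^ (1 / (p - 1))) (ENNReal.ofReal p)
            (wMeasure w) ≤
          eLpNorm (fun ξ => Real.sign (f ξ) * |f ξ| ^ (1 / (p - 1)) + φ ξ)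
            (ENNReal.ofReal p) (wMeasure w)) ↔
      (∀ φ : (Fin n → ℝ) → ℝ, MemN w p φ → (∫ ξ, f ξ * φ ξ * w ξ) = 0) :=
  orthogonality_iff_minimality_general U w hw p q hp hq f hf

end
end

section
/- Let w(x,y) = w_X(x)·w_Y(y) be a product density on ℝ², where w_X and w_Y are strictly positive probability densities on ℝ. If f, g : ℝ → ℝ are measurable with f(x), g(y) ∈ L^1(w) and the function (x,y) ↦ f(x)+g(y) belongs to L^2(w), then ∫ f(x)² w_X(x)dx < ∞ and ∫ g(y)² w_Y(y)dy < ∞, i.e. f(x) ∈ L^2(w) and g(y) ∈ L^2(w). -/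
/-! For a product measure `μ ⊗ ν`, if `(x, y) ↦ f x + g y` is in `Lᵖ(μ ⊗ ν)` then by Fubini almost
every section `y ↦ f x₀ + g y` is in `Lᵖ(ν)`; on a finite measure constants are in `Lᵖ`, so
`g = (f x₀ + g) - f x₀ ∈ Lᵖ(ν)`, and symmetrically `f ∈ Lᵖ(μ)`. A product density `wX(x) wY(y)`
makes the weighted measure the product of the two marginal probability measures. -/

open MeasureTheory

noncomputable section

/-- The weighted measure `w(x,y)dxdy` on `ℝ²`. -/
def wMeasure2 (w : ℝ × ℝ → ℝ) : Measure (ℝ × ℝ) :=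
  volume.withDensity (fun z => ENNReal.ofReal (w z))

/-- `w` is a strictly positive (probability) density on `ℝ²`. -/
def IsDensity2 (w : ℝ × ℝ → ℝ) : Prop :=
  Measurable w ∧ (∀ z, 0 < w z) ∧ (∫ z, w z) = 1

/-- The Smirnov property on `ℝ²` for exponent `q`: whenever `f(x)+g(y) ∈ L^q(w)` with
`f(x), g(y) ∈ L^1(w)`, then `f(x), g(y) ∈ L^q(w)`. -/
def SmirnovProperty2 (w : ℝ × ℝ → ℝ) (q : ℝ) : Prop :=
  ∀ f g : ℝ → ℝ, Measurable f → Measurable g →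
    MemLp (fun z : ℝ × ℝ => f z.1) 1 (wMeasure2 w) →
    MemLp (fun z : ℝ × ℝ => g z.2) 1 (wMeasure2 w) →
    MemLp (fun z : ℝ × ℝ => f z.1 + g z.2) (ENNReal.ofReal q) (wMeasure2 w) →
    MemLp (fun z : ℝ × ℝ => f z.1) (ENNReal.ofReal q) (wMeasure2 w) ∧
    MemLp (fun z : ℝ × ℝ => g z.2) (ENNReal.ofReal q) (wMeasure2 w)

namespace MeasureTheory

open scoped ENNReal

variable {α β E : Type*} [MeasurableSpace α] [MeasurableSpace β] [NormedAddCommGroup E]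
  {μ : Measure α} {ν : Measure β} {p : ℝ≥0∞}

theorem MemLp.prod_right_ae [SFinite μ] [SFinite ν] {F : α × β → E}
    (hF : MemLp F p (μ.prod ν)) (hp : p ≠ ∞) :
    ∀ᵐ x ∂μ, MemLp (fun y => F (x, y)) p ν := by
  rcases eq_or_ne p 0 with rfl | hp0
  · simpa only [memLp_zero_iff_aestronglyMeasurable] using hF.aestronglyMeasurable.prodMk_left
  filter_upwards [(hF.integrable_norm_rpow hp0 hp).prod_right_ae,
    hF.aestronglyMeasurable.prodMk_left] with x hx hmeas
  exact (integrable_norm_rpow_iff hmeas hp0 hp).1 hx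

theorem MemLp.prod_left_ae [SFinite μ] [SFinite ν] {F : α × β → E}
    (hF : MemLp F p (μ.prod ν)) (hp : p ≠ ∞) :
    ∀ᵐ y ∂ν, MemLp (fun x => F (x, y)) p μ :=
  (hF.comp_measurePreserving Measure.measurePreserving_swap).prod_right_ae hp

theorem MemLp.of_prod_add_right [SFinite μ] [NeZero μ] [IsFiniteMeasure ν]
    {f : α → E} {g : β → E} (h : MemLp (fun z => f z.1 + g z.2) p (μ.prod ν)) (hp : p ≠ ∞) :
    MemLp g p ν := by
  obtain ⟨x, hx⟩ := (h.prod_right_ae hp).exists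
  simpa [Pi.sub_def] using hx.sub (memLp_const (f x))

theorem MemLp.of_prod_add_left [IsFiniteMeasure μ] [SFinite ν] [NeZero ν]
    {f : α → E} {g : β → E} (h : MemLp (fun z => f z.1 + g z.2) p (μ.prod ν)) (hp : p ≠ ∞) :
    MemLp f p μ := by
  obtain ⟨y, hy⟩ := (h.prod_left_ae hp).exists
  simpa [Pi.sub_def] using hy.sub (memLp_const (g y))

theorem isProbabilityMeasure_withDensity_ofReal {w : α → ℝ} (hw : 0 ≤ᵐ[μ] w)
    (h : ∫ x, w x ∂μ = 1) : IsProbabilityMeasure (μ.withDensity fun x => ENNReal.ofReal (w x)) := by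
  have hint : Integrable w μ := by
    by_contra hw'
    simp [integral_undef hw'] at h
  constructor
  rw [withDensity_apply _ MeasurableSet.univ, Measure.restrict_univ,
    ← ofReal_integral_eq_lintegral_ofReal hint hw, h, ENNReal.ofReal_one]

theorem lintegral_ofReal_mul_lt_top_of_integrable_withDensity {w h : α → ℝ} (hw : Measurable w)
    (hw0 : ∀ x, 0 ≤ w x) (hh : Integrable h (μ.withDensity fun x => ENNReal.ofReal (w x))) :
    ∫⁻ x, ENNReal.ofReal (h x * w x) ∂μ < ∞ := by
  have hfin := hh.lintegral_lt_top
  rw [lintegral_withDensity_eq_lintegral_mul_non_measurable _ hw.ennreal_ofReal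
    (ae_of_all _ fun _ => ENNReal.ofReal_lt_top)] at hfin
  simpa only [Pi.mul_apply, mul_comm (h _), ENNReal.ofReal_mul (hw0 _)] using hfin

end MeasureTheory

theorem wMeasure2_eq_prod {wX wY : ℝ → ℝ} (hwX : Measurable wX) (hwY : Measurable wY)
    (hwX0 : ∀ x, 0 ≤ wX x) {w : ℝ × ℝ → ℝ} (hw : ∀ z : ℝ × ℝ, w z = wX z.1 * wY z.2) :
    wMeasure2 w = (volume.withDensity fun x => ENNReal.ofReal (wX x)).prod
      (volume.withDensity fun y => ENNReal.ofReal (wY y)) := by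
  rw [prod_withDensity hwX.ennreal_ofReal hwY.ennreal_ofReal, ← Measure.volume_eq_prod, wMeasure2]
  simp_rw [hw, ENNReal.ofReal_mul (hwX0 _)]

theorem product_density_Ltwo_smirnov_general
    (wX wY : ℝ → ℝ) (hwXmeas : Measurable wX) (hwYmeas : Measurable wY)
    (hwXpos : ∀ x, 0 < wX x) (hwYpos : ∀ y, 0 < wY y)
    (hwXint : (∫ x, wX x) = 1) (hwYint : (∫ y, wY y) = 1)
    (w : ℝ × ℝ → ℝ) (hw : ∀ z : ℝ × ℝ, w z = wX z.1 * wY z.2)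
    (f g : ℝ → ℝ)
    (hsum : MemLp (fun z : ℝ × ℝ => f z.1 + g z.2) 2 (wMeasure2 w)) :
    (∫⁻ x, ENNReal.ofReal (f x ^ 2 * wX x)) < ⊤ ∧
    (∫⁻ y, ENNReal.ofReal (g y ^ 2 * wY y)) < ⊤ ∧
    MemLp (fun z : ℝ × ℝ => f z.1) 2 (wMeasure2 w) ∧
    MemLp (fun z : ℝ × ℝ => g z.2) 2 (wMeasure2 w) := by
  set μX := volume.withDensity fun x => ENNReal.ofReal (wX x)
  set μY := volume.withDensity fun y => ENNReal.ofReal (wY y)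
  have : IsProbabilityMeasure μX :=
    isProbabilityMeasure_withDensity_ofReal (ae_of_all _ fun x => (hwXpos x).le) hwXint
  have : IsProbabilityMeasure μY :=
    isProbabilityMeasure_withDensity_ofReal (ae_of_all _ fun y => (hwYpos y).le) hwYint
  have hprod : wMeasure2 w = μX.prod μY :=
    wMeasure2_eq_prod hwXmeas hwYmeas (fun x => (hwXpos x).le) hw
  rw [hprod] at hsum ⊢
  have hf : MemLp f 2 μX := hsum.of_prod_add_left ENNReal.ofNat_ne_top
  have hg : MemLp g 2 μY := hsum.of_prod_add_right ENNReal.ofNat_ne_top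
  exact ⟨lintegral_ofReal_mul_lt_top_of_integrable_withDensity hwXmeas (fun x => (hwXpos x).le)
      hf.integrable_sq,
    lintegral_ofReal_mul_lt_top_of_integrable_withDensity hwYmeas (fun y => (hwYpos y).le)
      hg.integrable_sq,
    hf.comp_fst μY, hg.comp_snd μX⟩

/-- Remark `rem: smirnov`: for a product density `w(x,y) = w_X(x)w_Y(y)`,
if `f(x), g(y) ∈ L^1(w)` and `f(x)+g(y) ∈ L^2(w)`, then `∫ f² w_X < ∞` and
`∫ g² w_Y < ∞`, i.e. `f(x), g(y) ∈ L^2(w)`. -/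
theorem product_density_Ltwo_smirnov
    (wX wY : ℝ → ℝ) (hwXmeas : Measurable wX) (hwYmeas : Measurable wY)
    (hwXpos : ∀ x, 0 < wX x) (hwYpos : ∀ y, 0 < wY y)
    (hwXint : (∫ x, wX x) = 1) (hwYint : (∫ y, wY y) = 1)
    (w : ℝ × ℝ → ℝ) (hw : ∀ z : ℝ × ℝ, w z = wX z.1 * wY z.2)
    (f g : ℝ → ℝ) (hfmeas : Measurable f) (hgmeas : Measurable g)
    (hf1 : MemLp (fun z : ℝ × ℝ => f z.1) 1 (wMeasure2 w))
    (hg1 : MemLp (fun z : ℝ × ℝ => g z.2) 1 (wMeasure2 w))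
    (hsum : MemLp (fun z : ℝ × ℝ => f z.1 + g z.2) 2 (wMeasure2 w)) :
    (∫⁻ x, ENNReal.ofReal (f x ^ 2 * wX x)) < ⊤ ∧
    (∫⁻ y, ENNReal.ofReal (g y ^ 2 * wY y)) < ⊤ ∧
    MemLp (fun z : ℝ × ℝ => f z.1) 2 (wMeasure2 w) ∧
    MemLp (fun z : ℝ × ℝ => g z.2) 2 (wMeasure2 w) :=
  product_density_Ltwo_smirnov_general wX wY hwXmeas hwYmeas hwXpos hwYpos hwXint hwYint w hw f g
    hsum
end
end

section
/- For every q > 1 there exist a strictly positive density w on ℝ² and measurable functions f, g : ℝ → ℝ such that f(x) ∈ L^1(w) and g(y) ∈ L^1(w), the function (x,y) ↦ f(x)+g(y) belongs to L^q(w), and yet f(x) ∉ L^q(w) and g(y) ∉ L^q(w). In particular, there exist strictly positive densities on ℝ² that do not satisfy the Smirnov property for exponent q. -/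
/-!
Let `X` have density proportional to `(1 + |x|)^(-(q+1))`, let `T` be an independent standard
Gaussian, and let `w` be the joint density of `(X, X + T)`. For `f x = x` and `g y = -y` we get
`f(X) + g(X + T) = -T`, which has moments of all orders, while `X` has a first but no `q`-th
moment. Since `w` is a probability density, `g = (f + g) - f` then lies in `L¹(w)` but not in
`L^q(w)`.
-/

open MeasureTheory

noncomputable section

open ProbabilityTheory Set
open scoped ENNReal NNReal

lemma lintegral_ofReal_eq_one {α : Type*} [MeasurableSpace α] {μ : Measure α} {w : α → ℝ}
    (hw : 0 ≤ᵐ[μ] w) (h : ∫ x, w x ∂μ = 1) : ∫⁻ x, ENNReal.ofReal (w x) ∂μ = 1 := by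
  rw [← ofReal_integral_eq_lintegral_ofReal (.of_integral_ne_zero (by simp [h])) hw, h,
    ENNReal.ofReal_one]

lemma integral_pos_of_forall_pos {α : Type*} [MeasurableSpace α] {μ : Measure α} [NeZero μ]
    {h : α → ℝ} (hpos : ∀ x, 0 < h x) (hint : Integrable h μ) : 0 < ∫ x, h x ∂μ := by
  rw [integral_pos_iff_support_of_nonneg (fun x => (hpos x).le) hint,
    Function.support_eq_univ fun x => (hpos x).ne', Measure.measure_univ_pos]
  exact NeZero.ne μ

lemma memLp_withDensity_ofReal_iff {α : Type*} [MeasurableSpace α] {μ : Measure α}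
    {u f : α → ℝ} (hu : Measurable u) (hu0 : ∀ x, 0 ≤ u x) (hf : Measurable f) {p : ℝ}
    (hp : 0 < p) :
    MemLp f (ENNReal.ofReal p) (μ.withDensity fun x => ENNReal.ofReal (u x)) ↔
      Integrable (fun x => |f x| ^ p * u x) μ := by
  rw [← integrable_norm_rpow_iff hf.aestronglyMeasurable (by simpa using hp)
      ENNReal.ofReal_ne_top,
    integrable_withDensity_iff hu.ennreal_ofReal (.of_forall fun _ => ENNReal.ofReal_lt_top)]
  simp [ENNReal.toReal_ofReal hp.le, ENNReal.toReal_ofReal (hu0 _)]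

lemma lintegral_mul_comp_sub {G : Type*} [AddGroup G] [MeasurableSpace G] [MeasurableAdd₂ G]
    [MeasurableNeg G] (μ ν : Measure G) [SFinite μ] [SFinite ν] [ν.IsAddRightInvariant]
    {A B : G → ℝ≥0∞} (hA : Measurable A) (hB : Measurable B) :
    ∫⁻ z, A z.1 * B (z.2 - z.1) ∂μ.prod ν = (∫⁻ x, A x ∂μ) * ∫⁻ t, B t ∂ν := by
  rw [← lintegral_prod_mul hA.aemeasurable hB.aemeasurable]
  exact (measurePreserving_prod_sub μ ν).lintegral_comp
    ((hA.comp measurable_fst).mul (hB.comp measurable_snd))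

lemma IsDensity2.isProbabilityMeasure {w : ℝ × ℝ → ℝ} (hw : IsDensity2 w) :
    IsProbabilityMeasure (wMeasure2 w) :=
  ⟨by rw [wMeasure2, withDensity_apply _ MeasurableSet.univ, Measure.restrict_univ,
    lintegral_ofReal_eq_one (.of_forall fun z => (hw.2.1 z).le) hw.2.2]⟩

def IsDensity1 (u : ℝ → ℝ) : Prop :=
  Measurable u ∧ (∀ x, 0 < u x) ∧ ∫ x, u x = 1

lemma IsDensity1.lintegral_eq_one {u : ℝ → ℝ} (hu : IsDensity1 u) :
    ∫⁻ x, ENNReal.ofReal (u x) = 1 :=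
  lintegral_ofReal_eq_one (.of_forall fun x => (hu.2.1 x).le) hu.2.2

lemma isDensity1_div_integral {h : ℝ → ℝ} (hm : Measurable h) (hpos : ∀ x, 0 < h x)
    (hint : Integrable h) : IsDensity1 fun x => h x / ∫ y, h y :=
  have hI := integral_pos_of_forall_pos hpos hint
  ⟨hm.div_const _, fun x => div_pos (hpos x) hI, by rw [integral_div, div_self hI.ne']⟩

lemma isDensity1_gaussianPDFReal (μ : ℝ) {v : ℝ≥0} (hv : v ≠ 0) :
    IsDensity1 (gaussianPDFReal μ v) :=
  ⟨measurable_gaussianPDFReal μ v, fun x => gaussianPDFReal_pos μ v x hv,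
    integral_gaussianPDFReal_eq_one μ hv⟩

lemma memLp_id_withDensity_gaussianPDFReal (μ : ℝ) {v : ℝ≥0} (hv : v ≠ 0) {p : ℝ≥0∞}
    (hp : p ≠ ∞) :
    MemLp id p (volume.withDensity fun t => ENNReal.ofReal (gaussianPDFReal μ v t)) := by
  have h := memLp_id_gaussianReal' (μ := μ) (v := v) p hp
  rwa [gaussianReal_of_var_ne_zero _ hv] at h

def heavyTail (s x : ℝ) : ℝ := (1 + |x|) ^ (-s)

lemma heavyTail_pos (s x : ℝ) : 0 < heavyTail s x := by unfold heavyTail; positivity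

lemma measurable_heavyTail (s : ℝ) : Measurable (heavyTail s) := by
  unfold heavyTail; fun_prop

lemma rpow_sub_le_heavyTail {p s x : ℝ} (hs : 0 ≤ s) (hx : 1 < x) :
    x ^ (p - s) ≤ 2 ^ s * (|x| ^ p * heavyTail s x) := by
  have hx0 : 0 < x := by linarith
  have h2x : (2 * x) ^ (-s) ≤ (1 + x) ^ (-s) :=
    Real.rpow_le_rpow_of_nonpos (by positivity) (by linarith) (by linarith)
  calc x ^ (p - s) = 2 ^ s * (x ^ p * (2 * x) ^ (-s)) := by
        rw [Real.mul_rpow zero_le_two hx0.le, Real.rpow_neg zero_le_two, Real.rpow_sub hx0,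
          Real.rpow_neg hx0.le]
        field_simp
    _ ≤ 2 ^ s * (|x| ^ p * heavyTail s x) := by
        rw [heavyTail, abs_of_pos hx0]
        gcongr

lemma rpow_abs_mul_heavyTail_le {p s : ℝ} (hp : 0 ≤ p) (x : ℝ) :
    |x| ^ p * heavyTail s x ≤ (1 + |x|) ^ (-(s - p)) := by
  have hx : 0 < 1 + |x| := by positivity
  calc |x| ^ p * heavyTail s x ≤ (1 + |x|) ^ p * (1 + |x|) ^ (-s) := by
        unfold heavyTail
        gcongr
        linarith
    _ = (1 + |x|) ^ (-(s - p)) := by rw [← Real.rpow_add hx]; ring_nf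

lemma integrable_rpow_abs_mul_heavyTail_iff {p s : ℝ} (hp : 0 ≤ p) (hs : 0 ≤ s) :
    Integrable (fun x => |x| ^ p * heavyTail s x) ↔ p + 1 < s := by
  constructor
  · intro hint
    have hpow : IntegrableOn (fun x : ℝ => x ^ (p - s)) (Ioi 1) := by
      refine (hint.const_mul (2 ^ s)).integrableOn.mono' (by fun_prop) ?_
      filter_upwards [ae_restrict_mem measurableSet_Ioi] with x hx
      rw [Real.norm_of_nonneg (Real.rpow_nonneg (by linarith [mem_Ioi.1 hx]) _)]
      exact rpow_sub_le_heavyTail hs hx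
    linarith [(integrableOn_Ioi_rpow_iff one_pos).1 hpow]
  · intro hps
    refine (integrable_one_add_norm (E := ℝ) (r := s - p) (by simp; linarith)).mono'
      (by unfold heavyTail; fun_prop) (.of_forall fun x => ?_)
    rw [Real.norm_of_nonneg (by have := heavyTail_pos s x; positivity)]
    simpa using rpow_abs_mul_heavyTail_le hp x

lemma integrable_heavyTail {s : ℝ} (hs : 1 < s) : Integrable (heavyTail s) := by
  simpa using (integrable_rpow_abs_mul_heavyTail_iff le_rfl (by linarith)).2 (by linarith)

def heavyTailDensity (s x : ℝ) : ℝ := heavyTail s x / ∫ y, heavyTail s y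

lemma isDensity1_heavyTailDensity {s : ℝ} (hs : 1 < s) : IsDensity1 (heavyTailDensity s) :=
  isDensity1_div_integral (measurable_heavyTail s) (heavyTail_pos s) (integrable_heavyTail hs)

lemma memLp_id_heavyTailDensity_iff {p s : ℝ} (hp : 0 < p) (hs : 1 < s) :
    MemLp id (ENNReal.ofReal p)
        (volume.withDensity fun x => ENNReal.ofReal (heavyTailDensity s x)) ↔ p + 1 < s := by
  have hu := isDensity1_heavyTailDensity hs
  have hI := integral_pos_of_forall_pos (heavyTail_pos s) (integrable_heavyTail hs)
  rw [memLp_withDensity_ofReal_iff hu.1 (fun x => (hu.2.1 x).le) measurable_id hp,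
    ← integrable_rpow_abs_mul_heavyTail_iff hp.le (by linarith)]
  simp only [heavyTailDensity, id, div_eq_mul_inv, ← mul_assoc]
  exact integrable_mul_const_iff (inv_ne_zero hI.ne').isUnit _

section ShearProduct

/-- The joint density of `(X, X + T)` for independent `X` and `T` with densities `u` and `v`. -/
def shearProduct (u v : ℝ → ℝ) (z : ℝ × ℝ) : ℝ := u z.1 * v (z.2 - z.1)

variable {u v : ℝ → ℝ}

lemma lintegral_wMeasure2_shearProduct (hu : Measurable u) (hu0 : ∀ x, 0 ≤ u x)
    (hv : Measurable v) {A B : ℝ → ℝ≥0∞} (hA : Measurable A) (hB : Measurable B) :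
    ∫⁻ z, A z.1 * B (z.2 - z.1) ∂wMeasure2 (shearProduct u v) =
      (∫⁻ x, A x * ENNReal.ofReal (u x)) * ∫⁻ t, B t * ENNReal.ofReal (v t) := by
  have hW : Measurable fun z => ENNReal.ofReal (shearProduct u v z) :=
    ((hu.comp measurable_fst).mul (hv.comp (measurable_snd.sub measurable_fst))).ennreal_ofReal
  rw [wMeasure2, lintegral_withDensity_eq_lintegral_mul _ hW
      (show Measurable fun z : ℝ × ℝ => A z.1 * B (z.2 - z.1) by fun_prop),
    Measure.volume_eq_prod, ← lintegral_mul_comp_sub _ _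
      (show Measurable fun x => A x * ENNReal.ofReal (u x) from hA.mul hu.ennreal_ofReal)
      (show Measurable fun t => B t * ENNReal.ofReal (v t) from hB.mul hv.ennreal_ofReal)]
  congr 1 with z
  simp only [Pi.mul_apply, shearProduct, ENNReal.ofReal_mul (hu0 _)]
  ring

lemma isDensity2_shearProduct (hu : IsDensity1 u) (hv : IsDensity1 v) :
    IsDensity2 (shearProduct u v) := by
  have hpos (z : ℝ × ℝ) : 0 < shearProduct u v z := mul_pos (hu.2.1 _) (hv.2.1 _)
  have hmeas : Measurable (shearProduct u v) :=
    (hu.1.comp measurable_fst).mul (hv.1.comp (measurable_snd.sub measurable_fst))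
  refine ⟨hmeas, hpos, ?_⟩
  rw [integral_eq_lintegral_of_nonneg_ae (.of_forall fun z => (hpos z).le)
    hmeas.aestronglyMeasurable, Measure.volume_eq_prod]
  simp_rw [shearProduct, ENNReal.ofReal_mul (hu.2.1 _).le]
  rw [lintegral_mul_comp_sub _ _ hu.1.ennreal_ofReal hv.1.ennreal_ofReal, hu.lintegral_eq_one,
    hv.lintegral_eq_one, one_mul, ENNReal.toReal_one]

lemma map_fst_wMeasure2_shearProduct (hu : IsDensity1 u) (hv : IsDensity1 v) :
    (wMeasure2 (shearProduct u v)).map Prod.fst =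
      volume.withDensity fun x => ENNReal.ofReal (u x) := by
  ext s hs
  rw [Measure.map_apply measurable_fst hs, withDensity_apply _ hs, ← lintegral_indicator hs,
    ← lintegral_indicator_one (measurable_fst hs)]
  convert lintegral_wMeasure2_shearProduct hu.1 (fun x => (hu.2.1 x).le) hv.1
    (measurable_one.indicator hs) measurable_one using 2
  · ext z; simp only [Pi.one_apply, mul_one]; rfl
  · simp [hv.lintegral_eq_one, indicator]

lemma map_sub_wMeasure2_shearProduct (hu : IsDensity1 u) (hv : IsDensity1 v) :
    (wMeasure2 (shearProduct u v)).map (fun z => z.2 - z.1) =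
      volume.withDensity fun t => ENNReal.ofReal (v t) := by
  ext s hs
  have hsub : Measurable fun z : ℝ × ℝ => z.2 - z.1 := measurable_snd.sub measurable_fst
  rw [Measure.map_apply hsub hs, withDensity_apply _ hs, ← lintegral_indicator hs,
    ← lintegral_indicator_one (hsub hs)]
  convert lintegral_wMeasure2_shearProduct hu.1 (fun x => (hu.2.1 x).le) hv.1
    measurable_one (measurable_one.indicator hs) using 2
  · ext z; simp only [Pi.one_apply, one_mul]; rfl
  · simp [hu.lintegral_eq_one, indicator]

lemma memLp_comp_fst_wMeasure2_shearProduct_iff (hu : IsDensity1 u) (hv : IsDensity1 v)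
    {f : ℝ → ℝ} (hf : Measurable f) {p : ℝ≥0∞} :
    MemLp (fun z => f z.1) p (wMeasure2 (shearProduct u v)) ↔
      MemLp f p (volume.withDensity fun x => ENNReal.ofReal (u x)) := by
  rw [← map_fst_wMeasure2_shearProduct hu hv,
    memLp_map_measure_iff hf.aestronglyMeasurable measurable_fst.aemeasurable]
  rfl

lemma memLp_comp_sub_wMeasure2_shearProduct_iff (hu : IsDensity1 u) (hv : IsDensity1 v)
    {f : ℝ → ℝ} (hf : Measurable f) {p : ℝ≥0∞} :
    MemLp (fun z => f (z.2 - z.1)) p (wMeasure2 (shearProduct u v)) ↔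
      MemLp f p (volume.withDensity fun t => ENNReal.ofReal (v t)) := by
  rw [← map_sub_wMeasure2_shearProduct hu hv, memLp_map_measure_iff
    (f := fun z : ℝ × ℝ => z.2 - z.1) hf.aestronglyMeasurable (by fun_prop)]
  rfl

end ShearProduct

/-- Section `sec: counter`: for every `q > 1` there is a strictly positive
density `w` on `ℝ²` and functions `f, g` with `f(x), g(y) ∈ L^1(w)`,
`f(x)+g(y) ∈ L^q(w)`, but `f(x), g(y) ∉ L^q(w)`; in particular `w` fails the Smirnov
property for exponent `q`. -/
theorem exists_density_without_smirnov (q : ℝ) (hq : 1 < q) :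
    ∃ (w : ℝ × ℝ → ℝ) (f g : ℝ → ℝ),
      IsDensity2 w ∧ Measurable f ∧ Measurable g ∧
      MemLp (fun z : ℝ × ℝ => f z.1) 1 (wMeasure2 w) ∧
      MemLp (fun z : ℝ × ℝ => g z.2) 1 (wMeasure2 w) ∧
      MemLp (fun z : ℝ × ℝ => f z.1 + g z.2) (ENNReal.ofReal q) (wMeasure2 w) ∧
      ¬ MemLp (fun z : ℝ × ℝ => f z.1) (ENNReal.ofReal q) (wMeasure2 w) ∧
      ¬ MemLp (fun z : ℝ × ℝ => g z.2) (ENNReal.ofReal q) (wMeasure2 w) ∧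
      ¬ SmirnovProperty2 w q := by
  have hu := isDensity1_heavyTailDensity (s := q + 1) (by linarith)
  have hv := isDensity1_gaussianPDFReal 0 one_ne_zero
  set μ := wMeasure2 (shearProduct (heavyTailDensity (q + 1)) (gaussianPDFReal 0 1))
  have hw := isDensity2_shearProduct hu hv
  have := hw.isProbabilityMeasure
  have hf1 : MemLp (fun z : ℝ × ℝ => z.1) 1 μ := by
    simpa using (memLp_comp_fst_wMeasure2_shearProduct_iff hu hv measurable_id).2
      ((memLp_id_heavyTailDensity_iff one_pos (by linarith)).2 (by linarith))
  have hfq : ¬ MemLp (fun z : ℝ × ℝ => z.1) (ENNReal.ofReal q) μ := fun h =>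
    lt_irrefl _ <| (memLp_id_heavyTailDensity_iff (by linarith) (by linarith)).1 <|
      (memLp_comp_fst_wMeasure2_shearProduct_iff hu hv measurable_id).1 h
  have hfg : MemLp (fun z : ℝ × ℝ => z.1 + -z.2) (ENNReal.ofReal q) μ := by
    convert (memLp_comp_sub_wMeasure2_shearProduct_iff hu hv measurable_neg).2
      (memLp_id_withDensity_gaussianPDFReal 0 one_ne_zero ENNReal.ofReal_ne_top).neg using 2
    ring
  have hg1 : MemLp (fun z : ℝ × ℝ => -z.2) 1 μ := by
    convert (hfg.mono_exponent (ENNReal.one_le_ofReal.2 hq.le)).sub hf1 using 1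
    ext z; simp
  have hgq : ¬ MemLp (fun z : ℝ × ℝ => -z.2) (ENNReal.ofReal q) μ :=
    fun hg => hfq (by convert hfg.sub hg using 1; ext z; simp)
  exact ⟨_, id, Neg.neg, hw, measurable_id, measurable_neg, hf1, hg1, hfg, hfq, hgq,
    fun hS => hfq (hS _ _ measurable_id measurable_neg hf1 hg1 hfg).1⟩

end
end

section
/- Let (θ_i)_{i≥1} be positive reals with ∑_{i≥1} θ_i = 1 and define the diagonal density w(x,y) := ∑_{i≥1} θ_i·1_{[i,i+1)}(x)·1_{[i,i+1)}(y) on ℝ², with marginals w_X(x) = ∑_i θ_i 1_{[i,i+1)}(x) and w_Y(y) = ∑_i θ_i 1_{[i,i+1)}(y). Let f = ∑_{i≥1} f_i·1_{[i,i+1)} be a step function with ∑_{i≥1} |f_i| θ_i < ∞ and ∑_{i≥1} f_i θ_i = 0, and set g := −f. Then f ∈ L^1(w_X), g ∈ L^1(w_Y), and the pair (f,g) solves the homogeneous linear system: f(x)·w_X(x) + ∫ g(y)·w(x,y)dy = 0 for a.e. x, g(y)·w_Y(y) + ∫ f(x)·w(x,y)dx = 0 for a.e. y, and ∫ g(y)·w_Y(y)dy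 = 0. In particular, choosing the f_i not all zero, the system (with zero marginal data) admits non-trivial solutions, so uniqueness fails for this density. -/
open MeasureTheory

noncomputable section

/-- The step function `∑_{i ≥ 1} c_i · 1_{[i, i+1)}`, with coefficients indexed so that
`c k` is the value on `[k+1, k+2)`. -/
def stepFun (c : ℕ → ℝ) (x : ℝ) : ℝ :=
  ∑' k : ℕ, c k * Set.indicator (Set.Ico ((k : ℝ) + 1) ((k : ℝ) + 2)) 1 x

/-- The diagonal density `∑_{i ≥ 1} θ_i · 1_{[i,i+1)}(x) · 1_{[i,i+1)}(y)`. -/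
def diagDensity (θ : ℕ → ℝ) (z : ℝ × ℝ) : ℝ :=
  ∑' k : ℕ, θ k * Set.indicator (Set.Ico ((k : ℝ) + 1) ((k : ℝ) + 2)) 1 z.1 *
    Set.indicator (Set.Ico ((k : ℝ) + 1) ((k : ℝ) + 2)) 1 z.2

/-!
On the cell `[i, i+1)` containing `x`, the density `w(x, ·)` is `θ_i` times the indicator of
that same cell, so integrating a step function `f` against `w(x, ·)` returns `f(x) w_X(x)`.
Hence `(f, -f)` solves the homogeneous system, and the normalisation `∫ g w_Y = 0` reads
`∑ f_i θ_i = 0`. Since every cell has `w_X`-mass `θ_i > 0`, such an `f` vanishes `w_X`-a.e. only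
if all `f_i = 0`.
-/

open Set Function

section DisjointIndicators

variable {ι α R : Type*} [NonAssocSemiring R] [TopologicalSpace R] {s : ι → Set α}

lemma tsum_mul_indicator_one_of_mem (hs : Pairwise (Disjoint on s)) (c : ι → R) {i : ι} {x : α}
    (hx : x ∈ s i) : ∑' j, c j * (s j).indicator 1 x = c i := by
  rw [tsum_eq_single i fun j hj => by
    rw [indicator_of_notMem (disjoint_left.1 (hs hj.symm) hx), mul_zero]]
  simp [hx]

lemma tsum_mul_indicator_one_of_notMem (c : ι → R) {x : α} (hx : x ∉ ⋃ i, s i) :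
    ∑' j, c j * (s j).indicator 1 x = 0 := by
  simp_all

end DisjointIndicators

def stepCell (k : ℕ) : Set ℝ := Ico ((k : ℝ) + 1) ((k : ℝ) + 2)

lemma measurableSet_stepCell (k : ℕ) : MeasurableSet (stepCell k) := measurableSet_Ico

lemma mem_stepCell_iff {k : ℕ} {x : ℝ} : x ∈ stepCell k ↔ ⌊x⌋ = (k : ℤ) + 1 := by
  rw [Int.floor_eq_iff, stepCell, mem_Ico]
  push_cast
  ring_nf

lemma pairwise_disjoint_stepCell : Pairwise (Disjoint on stepCell) := fun j k hjk =>
  disjoint_left.2 fun x hj hk => hjk <| by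
    have := (mem_stepCell_iff.1 hj).symm.trans (mem_stepCell_iff.1 hk)
    omega

lemma iUnion_stepCell : ⋃ k, stepCell k = Ici 1 := by
  ext x
  have one_le_floor : (1 : ℤ) ≤ ⌊x⌋ ↔ 1 ≤ x := by rw [Int.le_floor, Int.cast_one]
  simp only [mem_iUnion, mem_stepCell_iff, mem_Ici, ← one_le_floor]
  constructor
  · rintro ⟨k, hk⟩
    omega
  · intro hx
    exact ⟨(⌊x⌋ - 1).toNat, by omega⟩

lemma lt_one_or_exists_mem_stepCell (x : ℝ) : x < 1 ∨ ∃ k, x ∈ stepCell k := by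
  rcases lt_or_ge x 1 with hx | hx
  · exact Or.inl hx
  · rw [← mem_iUnion, iUnion_stepCell]
    exact Or.inr hx

lemma volume_stepCell (k : ℕ) : volume (stepCell k) = 1 := by
  rw [stepCell, Real.volume_Ico]
  norm_num

lemma setIntegral_stepCell_of_eqOn {f : ℝ → ℝ} {k : ℕ} {a : ℝ}
    (hf : EqOn f (fun _ => a) (stepCell k)) : ∫ x in stepCell k, f x = a := by
  rw [setIntegral_congr_fun (measurableSet_stepCell k) hf, setIntegral_const, measureReal_def,
    volume_stepCell]
  simp

lemma stepFun_of_mem_stepCell (c : ℕ → ℝ) {k : ℕ} {x : ℝ} (hx : x ∈ stepCell k) :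
    stepFun c x = c k :=
  tsum_mul_indicator_one_of_mem pairwise_disjoint_stepCell c hx

lemma stepFun_of_lt_one (c : ℕ → ℝ) {x : ℝ} (hx : x < 1) : stepFun c x = 0 :=
  tsum_mul_indicator_one_of_notMem (s := stepCell) c (by simpa [iUnion_stepCell] using hx)

lemma stepFun_floor (c : ℕ → ℝ) (x : ℝ) : stepFun c ⌊x⌋ = stepFun c x := by
  rcases lt_one_or_exists_mem_stepCell x with hx | ⟨k, hx⟩
  · rw [stepFun_of_lt_one c hx, stepFun_of_lt_one c ((Int.floor_le x).trans_lt hx)]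
  · have hfloor : (⌊x⌋ : ℝ) ∈ stepCell k := by
      rw [mem_stepCell_iff, Int.floor_intCast]
      exact mem_stepCell_iff.1 hx
    rw [stepFun_of_mem_stepCell c hx, stepFun_of_mem_stepCell c hfloor]

lemma measurable_stepFun (c : ℕ → ℝ) : Measurable (stepFun c) := by
  rw [← funext (stepFun_floor c)]
  exact (measurable_from_top (f := fun n : ℤ => stepFun c n)).comp Int.measurable_floor

lemma stepFun_nonneg {c : ℕ → ℝ} (hc : ∀ k, 0 ≤ c k) (x : ℝ) : 0 ≤ stepFun c x := by
  rcases lt_one_or_exists_mem_stepCell x with hx | ⟨k, hx⟩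
  · rw [stepFun_of_lt_one c hx]
  · rw [stepFun_of_mem_stepCell c hx]
    exact hc k

lemma stepFun_mul_stepFun (a b : ℕ → ℝ) (x : ℝ) :
    stepFun a x * stepFun b x = stepFun (fun k => a k * b k) x := by
  rcases lt_one_or_exists_mem_stepCell x with hx | ⟨k, hx⟩
  · simp [stepFun_of_lt_one _ hx]
  · simp [stepFun_of_mem_stepCell _ hx]

lemma integrable_stepFun {a : ℕ → ℝ} (ha : Summable fun k => |a k|) :
    Integrable (stepFun a) := by
  have hcell (k : ℕ) : EqOn (stepFun a) (fun _ => a k) (stepCell k) :=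
    fun x hx => stepFun_of_mem_stepCell a hx
  have hon : IntegrableOn (stepFun a) (⋃ k, stepCell k) := by
    refine integrableOn_iUnion_of_summable_integral_norm (fun k => ?_) ?_
    · exact (integrableOn_const (by simp [volume_stepCell])).congr_fun (hcell k).symm
        (measurableSet_stepCell k)
    · convert ha using 2 with k
      exact setIntegral_stepCell_of_eqOn fun x hx => by simp only [hcell k hx, Real.norm_eq_abs]
  refine hon.integrable_of_forall_notMem_eq_zero fun x hx => stepFun_of_lt_one a ?_
  simpa [iUnion_stepCell] using hx

lemma integral_stepFun {a : ℕ → ℝ} (ha : Summable fun k => |a k|) :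
    ∫ x, stepFun a x = ∑' k, a k := by
  rw [← setIntegral_eq_integral_of_forall_compl_eq_zero (s := ⋃ k, stepCell k)
      fun x hx => stepFun_of_lt_one a (by simpa [iUnion_stepCell] using hx),
    integral_iUnion measurableSet_stepCell pairwise_disjoint_stepCell
      (integrable_stepFun ha).integrableOn]
  exact tsum_congr fun k => setIntegral_stepCell_of_eqOn fun x hx => stepFun_of_mem_stepCell a hx

lemma withDensity_stepFun_stepCell (θ : ℕ → ℝ) (k : ℕ) :
    volume.withDensity (fun x => ENNReal.ofReal (stepFun θ x)) (stepCell k) =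
      ENNReal.ofReal (θ k) := by
  rw [withDensity_apply _ (measurableSet_stepCell k),
    setLIntegral_congr_fun (measurableSet_stepCell k) fun x hx => by
      rw [stepFun_of_mem_stepCell θ hx],
    setLIntegral_const, volume_stepCell, mul_one]

lemma memLp_one_withDensity_stepFun {c θ : ℕ → ℝ} (hθ : ∀ k, 0 ≤ θ k)
    (hcθ : Summable fun k => |c k * θ k|) :
    MemLp (stepFun c) 1 (volume.withDensity fun x => ENNReal.ofReal (stepFun θ x)) := by
  rw [memLp_one_iff_integrable, integrable_withDensity_iff (measurable_stepFun θ).ennreal_ofReal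
    (.of_forall fun _ => ENNReal.ofReal_lt_top)]
  simp_rw [ENNReal.toReal_ofReal (stepFun_nonneg hθ _), stepFun_mul_stepFun]
  exact integrable_stepFun hcθ

lemma diagDensity_swap (θ : ℕ → ℝ) (x y : ℝ) :
    diagDensity θ (y, x) = diagDensity θ (x, y) := by
  simp only [diagDensity, mul_right_comm]

lemma diagDensity_eq_tsum (θ : ℕ → ℝ) (x y : ℝ) :
    diagDensity θ (x, y) =
      ∑' k, θ k * (stepCell k).indicator 1 y * (stepCell k).indicator 1 x :=
  tsum_congr fun _ => mul_right_comm _ _ _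

lemma diagDensity_of_mem_stepCell (θ : ℕ → ℝ) {k : ℕ} {x : ℝ} (hx : x ∈ stepCell k)
    (y : ℝ) :
    diagDensity θ (x, y) = (stepCell k).indicator (fun _ => θ k) y := by
  rw [diagDensity_eq_tsum, tsum_mul_indicator_one_of_mem pairwise_disjoint_stepCell _ hx]
  by_cases hy : y ∈ stepCell k <;> simp [hy]

lemma diagDensity_of_lt_one (θ : ℕ → ℝ) {x : ℝ} (hx : x < 1) (y : ℝ) :
    diagDensity θ (x, y) = 0 := by
  rw [diagDensity_eq_tsum]
  exact tsum_mul_indicator_one_of_notMem (s := stepCell) _ (by simpa [iUnion_stepCell] using hx)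

lemma integral_stepFun_mul_diagDensity_snd (c θ : ℕ → ℝ) (x : ℝ) :
    ∫ y, stepFun c y * diagDensity θ (x, y) = stepFun c x * stepFun θ x := by
  rcases lt_one_or_exists_mem_stepCell x with hx | ⟨k, hx⟩
  · simp [diagDensity_of_lt_one θ hx, stepFun_of_lt_one _ hx]
  · simp_rw [diagDensity_of_mem_stepCell θ hx, ← indicator_mul_right,
      integral_indicator (measurableSet_stepCell k)]
    rw [setIntegral_stepCell_of_eqOn (a := c k * θ k)
        fun y hy => by simp [stepFun_of_mem_stepCell c hy],
      stepFun_of_mem_stepCell c hx, stepFun_of_mem_stepCell θ hx]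

lemma integral_stepFun_mul_diagDensity_fst (c θ : ℕ → ℝ) (y : ℝ) :
    ∫ x, stepFun c x * diagDensity θ (x, y) = stepFun c y * stepFun θ y := by
  simp_rw [← diagDensity_swap θ _ y]
  exact integral_stepFun_mul_diagDensity_snd c θ y

theorem nonuniqueness_for_diagonal_density_general
    (θ : ℕ → ℝ) (hθpos : ∀ k, 0 < θ k)
    (fc : ℕ → ℝ) (hfl1 : Summable (fun k => |fc k| * θ k))
    (hf0 : (∑' k, fc k * θ k) = 0) :
    MemLp (stepFun fc) 1
      (volume.withDensity (fun x => ENNReal.ofReal (stepFun θ x))) ∧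
    MemLp (fun y => - stepFun fc y) 1
      (volume.withDensity (fun y => ENNReal.ofReal (stepFun θ y))) ∧
    (∀ᵐ x : ℝ, stepFun fc x * stepFun θ x +
        (∫ y, (- stepFun fc y) * diagDensity θ (x, y)) = 0) ∧
    (∀ᵐ y : ℝ, (- stepFun fc y) * stepFun θ y +
        (∫ x, stepFun fc x * diagDensity θ (x, y)) = 0) ∧
    (∫ y, (- stepFun fc y) * stepFun θ y) = 0 ∧
    ((∃ k, fc k ≠ 0) →
      ¬ (∀ᵐ x ∂(volume.withDensity (fun x => ENNReal.ofReal (stepFun θ x))),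
          stepFun fc x = 0)) := by
  have hθ (k : ℕ) : 0 ≤ θ k := (hθpos k).le
  have hfθ : Summable fun k => |fc k * θ k| := by
    simpa [abs_mul, abs_of_nonneg (hθ _)] using hfl1
  have hf := memLp_one_withDensity_stepFun hθ hfθ
  refine ⟨hf, hf.neg, .of_forall fun x => ?_, .of_forall fun y => ?_, ?_, ?_⟩
  · simp only [neg_mul, integral_neg, integral_stepFun_mul_diagDensity_snd, add_neg_cancel]
  · rw [integral_stepFun_mul_diagDensity_fst, neg_mul, neg_add_cancel]
  · simp only [neg_mul, integral_neg, stepFun_mul_stepFun, integral_stepFun hfθ, hf0, neg_zero]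
  · rintro ⟨k, hk⟩ hae
    have hnull := measure_mono_null (s := stepCell k)
      (fun x hx => by simpa [stepFun_of_mem_stepCell fc hx]) (ae_iff.1 hae)
    rw [withDensity_stepFun_stepCell, ENNReal.ofReal_eq_zero] at hnull
    exact (hθpos k).not_ge hnull

/-- non-uniqueness example: for the diagonal density built from `(θ_i)`,
any step function `f` with `∑|f_i|θ_i < ∞` and `∑ f_i θ_i = 0`, together with `g = -f`,
solves the homogeneous linear system with zero marginal data; choosing the `f_i` not all
zero yields a non-trivial solution, so uniqueness fails. -/
theorem nonuniqueness_for_diagonal_density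
    (θ : ℕ → ℝ) (hθpos : ∀ k, 0 < θ k) (hθsum : HasSum θ 1)
    (fc : ℕ → ℝ) (hfl1 : Summable (fun k => |fc k| * θ k))
    (hf0 : (∑' k, fc k * θ k) = 0) :
    MemLp (stepFun fc) 1
      (volume.withDensity (fun x => ENNReal.ofReal (stepFun θ x))) ∧
    MemLp (fun y => - stepFun fc y) 1
      (volume.withDensity (fun y => ENNReal.ofReal (stepFun θ y))) ∧
    (∀ᵐ x : ℝ, stepFun fc x * stepFun θ x +
        (∫ y, (- stepFun fc y) * diagDensity θ (x, y)) = 0) ∧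
    (∀ᵐ y : ℝ, (- stepFun fc y) * stepFun θ y +
        (∫ x, stepFun fc x * diagDensity θ (x, y)) = 0) ∧
    (∫ y, (- stepFun fc y) * stepFun θ y) = 0 ∧
    ((∃ k, fc k ≠ 0) →
      ¬ (∀ᵐ x ∂(volume.withDensity (fun x => ENNReal.ofReal (stepFun θ x))),
          stepFun fc x = 0)) :=
  nonuniqueness_for_diagonal_density_general θ hθpos fc hfl1 hf0
end
end
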